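/- Let F be a field of order q ≥ n + 2, let f : {0,1}^n → F be any function with multilinear extension g, let x ∈ {0,1}^n ⊆ F^n, and let y ∈ F^n be nonzero. Then f(x) can be recovered by Lagrange interpolation at 0 from the q − 1 pairs (j, g(x + j·y)) for j ∈ F \ {0}: the unique polynomial of degree < q − 1 through these points, evaluated at 0, equals f(x). -/

import Mathlib

/-!
Restricted to the line `j ↦ x + j • y`, the multilinear polynomial `g` becomes a univariate
polynomial of degree at most `n`, since each variable occurs to degree at most one and is
replaced by a polynomial of degree at most one. The `q - 1 ≥ n + 1` nonzero nodes therefore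
determine it, so Lagrange interpolation returns this restriction itself, and its value at `0`
is `g x = f x`.
-/

open scoped Classical

open Polynomial

namespace MvPolynomial

variable {R σ : Type*} [CommSemiring R]

theorem polynomial_eval_aeval (g : MvPolynomial σ R) (u : σ → R[X]) (j : R) :
    (aeval u g).eval j = eval (fun i => (u i).eval j) g := by
  simpa using congrArg (· g) (comp_aeval (R := R) (f := u) (Polynomial.aeval j))

theorem natDegree_aeval_le [Fintype σ] (g : MvPolynomial σ R) (u : σ → R[X]) :
    (aeval u g).natDegree ≤ ∑ i, g.degreeOf i * (u i).natDegree := by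
  rw [aeval_def, eval₂_eq]
  refine natDegree_sum_le_of_forall_le _ _ fun d hd => ?_
  refine natDegree_C_mul_le _ _ |>.trans <| (natDegree_prod_le _ _).trans ?_
  calc ∑ i ∈ d.support, (u i ^ d i).natDegree
      ≤ ∑ i ∈ d.support, g.degreeOf i * (u i).natDegree :=
        Finset.sum_le_sum fun i _ => natDegree_pow_le.trans
          (Nat.mul_le_mul_right _ (monomial_le_degreeOf i hd))
    _ ≤ ∑ i, g.degreeOf i * (u i).natDegree :=
        Finset.sum_le_sum_of_subset (Finset.subset_univ _)

noncomputable def restrictLine (g : MvPolynomial σ R) (x y : σ → R) : R[X] :=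
  aeval (fun i => Polynomial.C (x i) + Polynomial.X * Polynomial.C (y i)) g

theorem eval_restrictLine (g : MvPolynomial σ R) (x y : σ → R) (j : R) :
    (g.restrictLine x y).eval j = eval (fun i => x i + j * y i) g := by
  simp only [restrictLine, polynomial_eval_aeval, Polynomial.eval_add, Polynomial.eval_mul,
    Polynomial.eval_C, Polynomial.eval_X]

theorem natDegree_restrictLine_le [Fintype σ] (g : MvPolynomial σ R) (x y : σ → R) :
    (g.restrictLine x y).natDegree ≤ ∑ i, g.degreeOf i := by
  refine (natDegree_aeval_le g _).trans <| Finset.sum_le_sum fun i _ => ?_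
  calc g.degreeOf i * (Polynomial.C (x i) + Polynomial.X * Polynomial.C (y i)).natDegree
      ≤ g.degreeOf i * 1 := by
        gcongr
        compute_degree
    _ = g.degreeOf i := mul_one _

end MvPolynomial

theorem stmt_4_general (F : Type*) [Field F] [Fintype F] (n : ℕ)
    (hcard : n + 2 ≤ Fintype.card F)
    (f : (Fin n → Fin 2) → F) (g : MvPolynomial (Fin n) F)
    (hml : ∀ i : Fin n, g.degreeOf i ≤ 1)
    (hext : ∀ w : Fin n → Fin 2,
      MvPolynomial.eval (fun i => ((w i : ℕ) : F)) g = f w)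
    (x : Fin n → Fin 2) (y : Fin n → F) :
    (Lagrange.interpolate (Finset.univ.erase (0 : F)) id
        (fun j => MvPolynomial.eval (fun i => ((x i : ℕ) : F) + j * y i) g)).eval 0
      = f x := by
  set P := g.restrictLine (fun i => ((x i : ℕ) : F)) y
  have hdeg : P.natDegree < (Finset.univ.erase (0 : F)).card := by
    have hP : P.natDegree ≤ ∑ _i : Fin n, 1 :=
      (g.natDegree_restrictLine_le _ y).trans (Finset.sum_le_sum fun i _ => hml i)
    rw [Finset.card_erase_of_mem (Finset.mem_univ _), Finset.card_univ]
    simp only [Finset.sum_const, Finset.card_univ, Fintype.card_fin, smul_eq_mul,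
      mul_one] at hP
    omega
  rw [← Lagrange.eq_interpolate_of_eval_eq _ Function.injective_id.injOn
    (degree_le_natDegree.trans_lt (by exact_mod_cast hdeg))
    fun j _ => g.eval_restrictLine _ y j, g.eval_restrictLine]
  simpa using hext x

/-- For a field `F` with `q ≥ n + 2` elements, `f : {0,1}^n → F` with multilinear
extension `g`, `x ∈ {0,1}^n`, and nonzero `y ∈ F^n`: the Lagrange interpolation
polynomial through the points `(j, g(x + j·y))` for `j ∈ F \ {0}`, evaluated at `0`,
equals `f(x)`. -/
theorem stmt_4 (F : Type*) [Field F] [Fintype F] (n : ℕ)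
    (hcard : n + 2 ≤ Fintype.card F)
    (f : (Fin n → Fin 2) → F) (g : MvPolynomial (Fin n) F)
    (hml : ∀ i : Fin n, g.degreeOf i ≤ 1)
    (hext : ∀ w : Fin n → Fin 2,
      MvPolynomial.eval (fun i => ((w i : ℕ) : F)) g = f w)
    (x : Fin n → Fin 2) (y : Fin n → F) (hy : y ≠ 0) :
    (Lagrange.interpolate (Finset.univ.erase (0 : F)) id
        (fun j => MvPolynomial.eval (fun i => ((x i : ℕ) : F) + j * y i) g)).eval 0
      = f x :=
  stmt_4_general F n hcard f g hml hext x y
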